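/- If G = Q_n(X) is a daisy cube, then D_{G,0^n}(x,y) = D_{G,0^n}(y,x); equivalently, for all integers k, d ≥ 0, the number of induced k-cubes of G at distance d from 0^n equals the number of induced d-cubes of G at distance k from 0^n. -/

import Mathlib

def Qcube (n : ℕ) : SimpleGraph (Fin n → Bool) where
  Adj u v := hammingDist u v = 1
  symm := ⟨fun u v h => by rwa [hammingDist_comm]⟩
  loopless := ⟨fun u h => by simp [hammingDist_self] at h⟩

def daisySet {n : ℕ} (X : Set (Fin n → Bool)) : Set (Fin n → Bool) :=
  {u | ∃ x ∈ X, u ≤ x}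

noncomputable def cubeCount {V : Type*} (G : SimpleGraph V) (k : ℕ) : ℕ :=
  Set.ncard {S : Set V | Nonempty (G.induce S ≃g Qcube k)}

noncomputable def distToSet {V : Type*} (G : SimpleGraph V) (u : V) (S : Set V) : ℕ :=
  sInf (G.dist u '' S)

noncomputable def distCubeCount {V : Type*} (G : SimpleGraph V) (u : V) (k d : ℕ) : ℕ :=
  Set.ncard {S : Set V | Nonempty (G.induce S ≃g Qcube k) ∧ distToSet G u S = d}

noncomputable def wCount {V : Type*} (G : SimpleGraph V) (u : V) (d : ℕ) : ℕ :=
  Set.ncard {v : V | G.dist u v = d}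

def interval {V : Type*} (G : SimpleGraph V) (u v : V) : Set V :=
  {w | G.dist u v = G.dist u w + G.dist w v}

/-!
In a daisy cube containing `0ⁿ` the distance from `0ⁿ` to a vertex is its weight, since the
vertices form a lower set and one can walk down one coordinate at a time. An induced `Q_k` in
`Q_n` is a subcube: opposite edges of a square of `Q_n` flip the same coordinate, so each of the
`k` directions of `Q_k` is sent to one fixed coordinate of `Q_n`. Thus the induced `k`-cubes at
distance `d` are the intervals `[b, t]` with `t` in the daisy cube, `|t - b| = k` and `|b| = d`,
and `[b, t] ↦ [t \ b, t]` exchanges `k` and `d` while keeping the top vertex `t`.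
-/

open Function Set

section Weight

variable {ι : Type*} [Fintype ι]

lemma hammingDist_bot_mono : Monotone (hammingDist (⊥ : ι → Bool)) := by
  intro u v huv
  refine Finset.card_le_card fun j => ?_
  simpa using fun hu => Bool.le_iff_imp.1 (huv j) hu

lemma hammingDist_sdiff_self {b t : ι → Bool} (h : b ≤ t) :
    hammingDist (t \ b) t = hammingDist ⊥ b := by
  unfold hammingDist
  congr 1
  ext j
  simp only [Finset.mem_filter, Finset.mem_univ, true_and, Pi.sdiff_apply, Pi.bot_apply]
  have := h j
  revert this
  cases b j <;> cases t j <;> simp [disjoint_iff]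

lemma hammingDist_bot_sdiff {b t : ι → Bool} (h : b ≤ t) :
    hammingDist ⊥ (t \ b) = hammingDist b t := by
  rw [← hammingDist_sdiff_self sdiff_le, sdiff_sdiff_eq_self h]

end Weight

section Flip

variable {ι : Type*} [DecidableEq ι]

def flipAt (x : ι → Bool) (i : ι) : ι → Bool := update x i (!x i)

@[simp]
lemma flipAt_apply_self (x : ι → Bool) (i : ι) : flipAt x i i = !x i :=
  update_self ..

lemma flipAt_apply_of_ne (x : ι → Bool) {i j : ι} (h : j ≠ i) : flipAt x i j = x j :=
  update_of_ne h ..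

@[simp]
lemma flipAt_flipAt_self (x : ι → Bool) (i : ι) : flipAt (flipAt x i) i = x := by
  ext j
  rcases eq_or_ne j i with rfl | h
  · simp
  · simp [flipAt_apply_of_ne _ h]

lemma flipAt_comm (x : ι → Bool) (i j : ι) : flipAt (flipAt x i) j = flipAt (flipAt x j) i := by
  rcases eq_or_ne i j with rfl | hij
  · rfl
  ext m
  rcases eq_or_ne m i with rfl | hmi
  · simp [flipAt_apply_of_ne _ hij]
  rcases eq_or_ne m j with rfl | hmj
  · simp [flipAt_apply_of_ne _ hmi]
  · simp [flipAt_apply_of_ne _ hmi, flipAt_apply_of_ne _ hmj]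

lemma flipAt_injective (x : ι → Bool) : Injective (flipAt x) := by
  intro i j h
  by_contra hij
  simpa [flipAt_apply_of_ne _ hij] using congrFun h i

lemma flipAt_flipAt_ne_self (x : ι → Bool) {i j : ι} (h : i ≠ j) :
    flipAt (flipAt x j) i ≠ x := by
  intro hx
  simpa [flipAt_apply_of_ne _ h] using congrFun hx i

lemma le_flipAt {x : ι → Bool} {i : ι} (h : x i = false) : x ≤ flipAt x i := by
  intro j
  rcases eq_or_ne j i with rfl | hj
  · simp [h]
  · rw [flipAt_apply_of_ne _ hj]

variable [Fintype ι]

lemma hammingDist_flipAt_of_ne {x y : ι → Bool} {i : ι} (h : x i ≠ y i) :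
    hammingDist (flipAt x i) y + 1 = hammingDist x y := by
  unfold hammingDist
  rw [← Finset.card_insert_of_notMem (a := i) (by simp_all)]
  congr 1
  ext j
  rcases eq_or_ne j i with rfl | hj
  · simp [h]
  · simp [flipAt_apply_of_ne _ hj, hj]

lemma hammingDist_flipAt_self (x : ι → Bool) (i : ι) : hammingDist x (flipAt x i) = 1 := by
  have h := hammingDist_flipAt_of_ne (x := x) (y := flipAt x i) (i := i) (by simp)
  rwa [hammingDist_self, zero_add, eq_comm] at h

lemma hammingDist_eq_one_iff {x y : ι → Bool} :
    hammingDist x y = 1 ↔ ∃ i, y = flipAt x i := by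
  refine ⟨fun h => ?_, fun ⟨i, hy⟩ => hy ▸ hammingDist_flipAt_self x i⟩
  obtain ⟨i, hi⟩ := Function.ne_iff.1 (hammingDist_ne_zero.1 (h ▸ one_ne_zero))
  have := hammingDist_flipAt_of_ne hi
  exact ⟨i, (hammingDist_eq_zero.1 (by omega)).symm⟩

theorem flipAt_induction {P : (ι → Bool) → Prop} {y : ι → Bool} (base : P y)
    (step : ∀ x i, x i = y i → P x → P (flipAt x i)) (x : ι → Bool) : P x := by
  induction h : hammingDist x y generalizing x with
  | zero => rwa [hammingDist_eq_zero.1 h]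
  | succ m ih =>
    have hxy : x ≠ y := hammingDist_ne_zero.1 (by omega)
    obtain ⟨i, hi⟩ := Function.ne_iff.1 hxy
    have hflip : flipAt x i i = y i := by
      rw [flipAt_apply_self]
      revert hi
      cases x i <;> cases y i <;> decide
    have hdist := hammingDist_flipAt_of_ne hi
    simpa using step _ i hflip (ih _ (by omega))

end Flip

section Extend

variable {κ ι β : Type*} {σ : κ → ι}

lemma Function.Injective.extend_comp_self (hσ : Injective σ) (y : ι → β) :
    extend σ (y ∘ σ) y = y := by
  funext j
  by_cases hj : ∃ i, σ i = j
  · obtain ⟨i, rfl⟩ := hj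
    exact hσ.extend_apply _ _ _
  · exact extend_apply' _ _ _ hj

lemma extend_mono_left [Preorder β] (y : ι → β) :
    Monotone fun x : κ → β => extend σ x y := by
  classical
  intro x x' h j
  simp only [extend_def]
  split_ifs
  exacts [h _, le_rfl]

lemma flipAt_extend [DecidableEq κ] [DecidableEq ι] (hσ : Injective σ) (x : κ → Bool)
    (y : ι → Bool) (i : κ) : flipAt (extend σ x y) (σ i) = extend σ (flipAt x i) y := by
  funext j
  by_cases hj : ∃ i', σ i' = j
  · obtain ⟨i', rfl⟩ := hj
    simp [flipAt, update_apply, hσ.extend_apply, hσ.eq_iff]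
  · have hji : j ≠ σ i := fun h => hj ⟨i, h.symm⟩
    simp [flipAt_apply_of_ne _ hji, extend_apply' _ _ _ hj]

lemma hammingDist_extend [Fintype κ] [Fintype ι] [DecidableEq ι] [DecidableEq β]
    (hσ : Injective σ) (x x' : κ → β) (y : ι → β) :
    hammingDist (extend σ x y) (extend σ x' y) = hammingDist x x' := by
  unfold hammingDist
  rw [← Finset.card_image_of_injective _ hσ]
  congr 1
  ext j
  by_cases hj : ∃ i, σ i = j
  · obtain ⟨i, rfl⟩ := hj
    simp [hσ.extend_apply, hσ.eq_iff]
  · simp [not_exists.1 hj]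

lemma range_extend_eq_Icc [PartialOrder β] [BoundedOrder β] (hσ : Injective σ) (y : ι → β) :
    range (fun x => extend σ x y) = Icc (extend σ ⊥ y) (extend σ ⊤ y) := by
  ext z
  constructor
  · rintro ⟨x, rfl⟩
    exact ⟨extend_mono_left y bot_le, extend_mono_left y le_top⟩
  · rintro ⟨hb, ht⟩
    refine ⟨z ∘ σ, funext fun j => ?_⟩
    by_cases hj : ∃ i, σ i = j
    · obtain ⟨i, rfl⟩ := hj
      exact hσ.extend_apply _ _ _
    · have hb := hb j
      have ht := ht j
      simp only [extend_apply' _ _ _ hj] at hb ht ⊢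
      exact le_antisymm hb ht

end Extend

noncomputable def SimpleGraph.induceInduceIso {V : Type*} (G : SimpleGraph V) (D : Set V)
    (S : Set D) : (G.induce D).induce S ≃g G.induce (Subtype.val '' S) :=
  ⟨Equiv.Set.image _ S Subtype.val_injective, Iff.rfl⟩

lemma IsLowerSet.image_val_preimage_Icc {α : Type*} [Preorder α] {D : Set α} (hD : IsLowerSet D)
    {b t : α} (ht : t ∈ D) : Subtype.val '' (Subtype.val ⁻¹' Icc b t : Set D) = Icc b t := by
  rw [Subtype.image_preimage_coe, inter_eq_right]
  exact fun _ hz => hD hz.2 ht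

namespace Qcube

variable {n k : ℕ} {D : Set (Fin n → Bool)}

lemma adj_iff {u v : Fin n → Bool} : (Qcube n).Adj u v ↔ ∃ i, v = flipAt u i :=
  hammingDist_eq_one_iff

lemma adj_flipAt (x : Fin n → Bool) (i : Fin n) : (Qcube n).Adj x (flipAt x i) :=
  hammingDist_flipAt_self x i

lemma eq_flipAt_flipAt_of_adj {y z : Fin n → Bool} {a d : Fin n} (had : a ≠ d)
    (ha : (Qcube n).Adj (flipAt y a) z) (hd : (Qcube n).Adj (flipAt y d) z) (hz : z ≠ y) :
    z = flipAt (flipAt y a) d := by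
  obtain ⟨b, rfl⟩ := adj_iff.1 ha
  obtain ⟨c, hc⟩ := adj_iff.1 hd
  have hab : a ≠ b := by rintro rfl; simp at hz
  have hca : c = a := by
    by_contra hca
    simpa [flipAt_apply_of_ne _ hab, flipAt_apply_of_ne _ (Ne.symm hca),
      flipAt_apply_of_ne _ had] using congrFun hc a
  rw [hc, hca, flipAt_comm]

theorem exists_map_flipAt (f : Qcube k ↪g Qcube n) :
    ∃ σ : Fin k ↪ Fin n, ∀ x i, f (flipAt x i) = flipAt (f x) (σ i) := by
  choose σ hσ using fun i => adj_iff.1 (f.map_adj_iff.2 (adj_flipAt ⊥ i))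
  have hσinj : Injective σ := fun i j hij =>
    flipAt_injective _ (f.injective (by rw [hσ, hσ, hij]))
  refine ⟨⟨σ, hσinj⟩, flipAt_induction (y := ⊥) hσ fun x j _ hx i => ?_⟩
  rcases eq_or_ne i j with rfl | hij
  · rw [flipAt_flipAt_self, hx, flipAt_flipAt_self]
  · rw [hx j]
    refine eq_flipAt_flipAt_of_adj (hσinj.ne hij.symm) ?_ ?_
      (f.injective.ne (flipAt_flipAt_ne_self x hij))
    · rw [← hx j]
      exact f.map_adj_iff.2 (adj_flipAt _ _)
    · rw [← hx i, flipAt_comm]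
      exact f.map_adj_iff.2 (adj_flipAt _ _)

theorem exists_range_eq_range_extend (f : Qcube k ↪g Qcube n) :
    ∃ σ : Fin k ↪ Fin n, range f = range (fun x => extend σ x (f ⊥)) := by
  obtain ⟨σ, hf⟩ := exists_map_flipAt f
  refine ⟨σ, Subset.antisymm ?_ ?_⟩
  · rintro _ ⟨x, rfl⟩
    induction x using flipAt_induction (y := (⊥ : Fin k → Bool)) with
    | base => exact ⟨f ⊥ ∘ σ, σ.injective.extend_comp_self _⟩
    | step x i _ ih =>
      obtain ⟨w, hw⟩ := ih
      replace hw : extend σ w (f ⊥) = f x := hw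
      exact ⟨flipAt w i, by rw [hf, ← hw, flipAt_extend σ.injective]⟩
  · rintro _ ⟨w, rfl⟩
    induction w using flipAt_induction (y := f ⊥ ∘ σ) with
    | base => exact ⟨⊥, (σ.injective.extend_comp_self _).symm⟩
    | step w i _ ih =>
      obtain ⟨x, hx⟩ := ih
      replace hx : f x = extend σ w (f ⊥) := hx
      exact ⟨flipAt x i, by rw [hf, hx, flipAt_extend σ.injective]⟩

noncomputable def extendEmbedding (σ : Fin k ↪ Fin n) (y : Fin n → Bool) :
    Qcube k ↪g Qcube n where
  toFun x := extend σ x y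
  inj' := by
    intro x x' h
    rw [← hammingDist_eq_zero, ← hammingDist_extend σ.injective x x' y]
    exact hammingDist_eq_zero.2 h
  map_rel_iff' {x x'} := by
    change hammingDist (extend σ x y) (extend σ x' y) = 1 ↔ hammingDist x x' = 1
    rw [hammingDist_extend σ.injective]

lemma exists_Icc_eq_range_extend {b t : Fin n → Bool} (hbt : b ≤ t) :
    ∃ σ : Fin (hammingDist b t) ↪ Fin n, Icc b t = range (fun x => extend σ x b) := by
  have hcard : (Finset.univ.filter fun j => b j ≠ t j).card = hammingDist b t := rfl
  obtain ⟨σ, hrange⟩ :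
      ∃ σ : Fin (hammingDist b t) ↪o Fin n, ∀ j, (∃ i, σ i = j) ↔ b j ≠ t j :=
    ⟨_, fun j => by rw [← mem_range, Finset.range_orderEmbOfFin _ hcard]; simp⟩
  have hlt : ∀ i, b (σ i) = false ∧ t (σ i) = true := fun i =>
    Bool.lt_iff.1 ((hbt _).lt_of_ne ((hrange _).1 ⟨i, rfl⟩))
  have hbot : extend σ ⊥ b = b := funext fun j => by
    by_cases hj : ∃ i, σ i = j
    · obtain ⟨i, rfl⟩ := hj
      simp [σ.injective.extend_apply, (hlt i).1]
    · simp [extend_apply' _ _ _ hj]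
  have htop : extend σ ⊤ b = t := funext fun j => by
    by_cases hj : ∃ i, σ i = j
    · obtain ⟨i, rfl⟩ := hj
      simp [σ.injective.extend_apply, (hlt i).2]
    · simp [extend_apply' _ _ _ hj, not_not.1 (mt (hrange j).2 hj)]
  refine ⟨σ.toEmbedding, ?_⟩
  rw [range_extend_eq_Icc σ.toEmbedding.injective]
  exact congrArg₂ Icc hbot.symm htop.symm

theorem nonempty_induce_iso_iff {T : Set (Fin n → Bool)} :
    Nonempty ((Qcube n).induce T ≃g Qcube k) ↔
      ∃ b t, b ≤ t ∧ hammingDist b t = k ∧ T = Icc b t := by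
  constructor
  · rintro ⟨ψ⟩
    let f : Qcube k ↪g Qcube n := (SimpleGraph.Embedding.induce T).comp ψ.symm.toEmbedding
    obtain ⟨σ, hf⟩ := exists_range_eq_range_extend f
    have hT : range f = T := by simp [f]; exact Subtype.range_coe
    have hIcc := range_extend_eq_Icc σ.injective (f ⊥)
    refine ⟨extend σ ⊥ (f ⊥), extend σ ⊤ (f ⊥), ?_, ?_, by rw [← hT, hf, hIcc]⟩
    · exact (hIcc.subset (mem_range_self ⊥)).2
    · rw [hammingDist_extend σ.injective]
      simp [hammingDist]
  · rintro ⟨b, t, hbt, rfl, rfl⟩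
    obtain ⟨σ, hσ⟩ := exists_Icc_eq_range_extend hbt
    exact ⟨(hσ ▸ (extendEmbedding σ b).isoInduceRange).symm⟩

lemma hammingDist_le_length {u v : Fin n → Bool} (p : (Qcube n).Walk u v) :
    hammingDist u v ≤ p.length := by
  induction p with
  | nil => simp
  | @cons u v w h p ih =>
    have h : hammingDist u v = 1 := h
    have := hammingDist_triangle u v w
    rw [SimpleGraph.Walk.length_cons]
    omega

theorem dist_induce_bot (hD : IsLowerSet D) (h0 : ⊥ ∈ D) (v : D) :
    ((Qcube n).induce D).dist ⟨⊥, h0⟩ v = hammingDist ⊥ (v : Fin n → Bool) := by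
  have hwalk : ∀ x (hx : x ∈ D), ∃ p : ((Qcube n).induce D).Walk ⟨⊥, h0⟩ ⟨x, hx⟩,
      p.length = hammingDist ⊥ x := by
    intro x
    induction x using flipAt_induction (y := (⊥ : Fin n → Bool)) with
    | base => exact fun _ => ⟨.nil, by simp⟩
    | step x i hxi ih =>
      intro hx'
      have hx : x ∈ D := hD (le_flipAt hxi) hx'
      obtain ⟨p, hp⟩ := ih hx
      have hdist := hammingDist_flipAt_of_ne (x := flipAt x i) (y := ⊥) (i := i) (by simp [hxi])
      rw [flipAt_flipAt_self] at hdist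
      have hadj : ((Qcube n).induce D).Adj ⟨x, hx⟩ ⟨flipAt x i, hx'⟩ := adj_flipAt x i
      refine ⟨p.concat hadj, ?_⟩
      rw [SimpleGraph.Walk.length_concat, hp, hammingDist_comm ⊥ x, hdist, hammingDist_comm]
  obtain ⟨p, hp⟩ := hwalk v v.2
  obtain ⟨q, hq⟩ := p.reachable.exists_walk_length_eq_dist
  refine le_antisymm (hp ▸ SimpleGraph.dist_le p) ?_
  rw [← hq, ← q.length_map (SimpleGraph.Embedding.induce D).toHom]
  exact hammingDist_le_length _

lemma distToSet_induce_eq (hD : IsLowerSet D) (h0 : ⊥ ∈ D) {S : Set D} {b t : Fin n → Bool}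
    (hbt : b ≤ t) (hS : Subtype.val '' S = Icc b t) :
    distToSet ((Qcube n).induce D) ⟨⊥, h0⟩ S = hammingDist ⊥ b := by
  have himage : ((Qcube n).induce D).dist ⟨⊥, h0⟩ '' S = hammingDist ⊥ '' Icc b t := by
    rw [← hS, image_image]
    exact image_congr fun v _ => dist_induce_bot hD h0 v
  rw [distToSet, himage]
  exact ((hammingDist_bot_mono.monotoneOn _).map_isLeast (isLeast_Icc hbt)).csInf_eq

/-- The pair `(b, t)` stands for the subcube `[b, t]`, of dimension `hammingDist b t` and at
distance `hammingDist ⊥ b` from `⊥`. -/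
def subcubeBounds (D : Set (Fin n → Bool)) (k d : ℕ) :
    Set ((Fin n → Bool) × (Fin n → Bool)) :=
  {p | p.1 ≤ p.2 ∧ p.2 ∈ D ∧ hammingDist p.1 p.2 = k ∧ hammingDist ⊥ p.1 = d}

lemma setOf_induce_iso_eq_image (hD : IsLowerSet D) (h0 : ⊥ ∈ D) (k d : ℕ) :
    {S : Set D | Nonempty (((Qcube n).induce D).induce S ≃g Qcube k) ∧
        distToSet ((Qcube n).induce D) ⟨⊥, h0⟩ S = d} =
      (fun p => (Subtype.val ⁻¹' Icc p.1 p.2 : Set D)) '' subcubeBounds D k d := by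
  ext S
  constructor
  · rintro ⟨⟨ψ⟩, hd⟩
    obtain ⟨b, t, hbt, hk, hS⟩ :=
      nonempty_induce_iso_iff.1 ⟨((Qcube n).induceInduceIso D S).symm.trans ψ⟩
    obtain ⟨v, -, hv⟩ : t ∈ Subtype.val '' S := hS ▸ right_mem_Icc.2 hbt
    have hdist := distToSet_induce_eq hD h0 hbt hS
    refine ⟨(b, t), ⟨hbt, hv ▸ v.2, hk, hdist.symm.trans hd⟩, ?_⟩
    change Subtype.val ⁻¹' Icc b t = S
    rw [← hS, preimage_image_eq _ Subtype.val_injective]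
  · rintro ⟨⟨b, t⟩, ⟨hbt, ht, hk, hd⟩, rfl⟩
    have hS := hD.image_val_preimage_Icc (b := b) ht
    obtain ⟨ψ⟩ := nonempty_induce_iso_iff.2 ⟨b, t, hbt, hk, hS⟩
    exact ⟨⟨((Qcube n).induceInduceIso D _).trans ψ⟩,
      (distToSet_induce_eq hD h0 hbt hS).trans hd⟩

theorem distCubeCount_eq_ncard_subcubeBounds (hD : IsLowerSet D) (h0 : ⊥ ∈ D) (k d : ℕ) :
    distCubeCount ((Qcube n).induce D) ⟨⊥, h0⟩ k d = (subcubeBounds D k d).ncard := by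
  rw [distCubeCount, setOf_induce_iso_eq_image hD h0]
  refine InjOn.ncard_image fun p hp q hq hpq => ?_
  have hIcc := congrArg (Subtype.val '' ·) hpq
  simp only [hD.image_val_preimage_Icc hp.2.1, hD.image_val_preimage_Icc hq.2.1] at hIcc
  obtain ⟨h1, h2⟩ := (Icc_eq_Icc_iff hp.1).1 hIcc
  exact Prod.ext h1 h2

lemma sdiff_mem_subcubeBounds {k d : ℕ} {b t : Fin n → Bool}
    (h : (b, t) ∈ subcubeBounds D k d) :
    (t \ b, t) ∈ subcubeBounds D d k := by
  obtain ⟨hbt, ht, hk, hd⟩ := h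
  exact ⟨sdiff_le, ht, (hammingDist_sdiff_self hbt).trans hd,
    (hammingDist_bot_sdiff hbt).trans hk⟩

theorem ncard_subcubeBounds_comm (D : Set (Fin n → Bool)) (k d : ℕ) :
    (subcubeBounds D k d).ncard = (subcubeBounds D d k).ncard := by
  refine ncard_congr (fun p _ => (p.2 \ p.1, p.2)) (fun _ hp => sdiff_mem_subcubeBounds hp) ?_ ?_
  · rintro ⟨b, t⟩ ⟨b', t'⟩ ⟨hbt, -⟩ ⟨hbt', -⟩ h
    simp only [Prod.mk.injEq] at h hbt hbt' ⊢
    obtain ⟨hsdiff, rfl⟩ := h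
    exact ⟨by rw [← sdiff_sdiff_eq_self hbt, hsdiff, sdiff_sdiff_eq_self hbt'], rfl⟩
  · rintro ⟨b, t⟩ hp
    exact ⟨(t \ b, t), sdiff_mem_subcubeBounds hp, by simp [sdiff_sdiff_eq_self hp.1]⟩

end Qcube

lemma isLowerSet_daisySet {n : ℕ} (X : Set (Fin n → Bool)) : IsLowerSet (daisySet X) :=
  fun _ _ hvu ⟨x, hx, hux⟩ => ⟨x, hx, hvu.trans hux⟩

theorem distCubeCount_daisy_symm (n : ℕ) (X : Set (Fin n → Bool))
    (h0 : (fun _ => false) ∈ daisySet X) (k d : ℕ) :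
    distCubeCount ((Qcube n).induce (daisySet X)) ⟨fun _ => false, h0⟩ k d =
    distCubeCount ((Qcube n).induce (daisySet X)) ⟨fun _ => false, h0⟩ d k :=
  calc _ = (Qcube.subcubeBounds (daisySet X) k d).ncard :=
        Qcube.distCubeCount_eq_ncard_subcubeBounds (isLowerSet_daisySet X) h0 k d
    _ = (Qcube.subcubeBounds (daisySet X) d k).ncard := Qcube.ncard_subcubeBounds_comm _ k d
    _ = _ := (Qcube.distCubeCount_eq_ncard_subcubeBounds (isLowerSet_daisySet X) h0 d k).symm
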